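/- arXiv:1803.04008 — 3 statements merged into one kernel-verified Lean document; each statement's English description precedes it below -/
import Mathlib

section
/- Let Θ be a finite set, P a row-stochastic matrix on Θ with stationary distribution π, and r : Θ → [0,1]. Suppose there exist constants C ≥ 0 and λ ∈ [0,1) such that for every probability distribution β on Θ and every integer t ≥ 0, ∑_{θ∈Θ} |(βPᵗ)(θ) − π(θ)| ≤ C λᵗ. Fix γ ∈ (0,1], an integer τ ≥ 1, a probability distribution β on Θ, and let Γ = ∑_{t=0}^{τ−1} γᵗ. Then |∑_θ r(θ)π(θ) − (1/Γ)∑_{t=0}^{τ−1} γ^{τ−1−t} ∑_θ r(θ)(βPᵗ)(θ)| ≤ (C/Γ)·Υ(τ), where, with η = min{γ,λ}, φ = max{γ,λ}, ψ = η/φ: Υ(τ) = φ^{τ−1}(1−ψ^τ)/(1−ψ) if γ ∈ (0,1) and γ ≠ λ; Υ(τ) = φ^{τ−1}τ if γ ∈ (0,1) and γ = λ; and Υ(τ) = (1−λ^τ)/(1−λ) if γ = 1. -/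
open Finset
open scoped Classical

noncomputable section

/-- The distribution after `t` steps of the chain with transition matrix `P`,
starting from the distribution `β`: `(β Pᵗ)(θ') = ∑ θ, (β P^{t-1})(θ) P(θ,θ')`. -/
def distIter {Θ : Type*} [Fintype Θ] (P : Θ → Θ → ℝ) (β : Θ → ℝ) : ℕ → Θ → ℝ
  | 0 => β
  | (t + 1) => fun θ' => ∑ θ, distIter P β t θ * P θ θ'

lemma upsilon_eq' (γ lam : ℝ) (hγ0 : 0 < γ) (hγ1 : γ ≤ 1) (hlam0 : 0 ≤ lam)
    (hlam1 : lam < 1) (τ : ℕ) (hτ : 1 ≤ τ) :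
    ∑ t ∈ Finset.range τ, γ ^ (τ - 1 - t) * lam ^ t =
      (if γ = 1 then (1 - lam ^ τ) / (1 - lam)
       else if γ = lam then (max γ lam) ^ (τ - 1) * τ
       else (max γ lam) ^ (τ - 1) * (1 - (min γ lam / max γ lam) ^ τ) /
         (1 - min γ lam / max γ lam)) := by
  by_cases h1 : γ = 1
  · subst h1
    rw [if_pos rfl]
    simp only [one_pow, one_mul]
    rw [geom_sum_eq (by linarith : lam ≠ 1) τ,
      show (1:ℝ) - lam ^ τ = -(lam ^ τ - 1) by ring,
      show (1:ℝ) - lam = -(lam - 1) by ring, neg_div_neg_eq]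
  · rw [if_neg h1]
    by_cases h2 : γ = lam
    · rw [if_pos h2, show max γ lam = γ by rw [h2, max_self]]
      have : ∀ t ∈ Finset.range τ, γ ^ (τ - 1 - t) * lam ^ t = γ ^ (τ - 1) := by
        intro t ht
        rw [← h2, ← pow_add]
        congr 1
        have := Finset.mem_range.mp ht
        omega
      rw [Finset.sum_congr rfl this, Finset.sum_const, Finset.card_range,
        nsmul_eq_mul, mul_comm]
    · rw [if_neg h2]
      have hγne : γ ≠ 0 := ne_of_gt hγ0
      rcases lt_or_gt_of_ne h2 with hlt | hgt
      · -- γ < lam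
        have hlam_pos : 0 < lam := lt_trans hγ0 hlt
        have hmax : max γ lam = lam := max_eq_right hlt.le
        have hmin : min γ lam = γ := min_eq_left hlt.le
        rw [hmax, hmin]
        have hψ1 : γ / lam ≠ 1 := fun h =>
          h2 ((div_eq_one_iff_eq (ne_of_gt hlam_pos)).mp h)
        have hterm : ∀ t ∈ Finset.range τ,
            γ ^ (τ - 1 - t) * lam ^ t = lam ^ (τ - 1) * (γ / lam) ^ (τ - 1 - t) := by
          intro t ht
          have h1' : lam ^ (τ - 1) = lam ^ (τ - 1 - t) * lam ^ t := by
            rw [← pow_add]; congr 1; have := Finset.mem_range.mp ht; omega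
          rw [div_pow, h1']
          field_simp
        rw [Finset.sum_congr rfl hterm, ← Finset.mul_sum,
          Finset.sum_range_reflect (fun t => (γ / lam) ^ t) τ,
          geom_sum_eq hψ1 τ,
          show (1:ℝ) - (γ/lam) ^ τ = -((γ/lam) ^ τ - 1) by ring,
          show (1:ℝ) - γ/lam = -(γ/lam - 1) by ring]
        rw [mul_div_assoc, neg_div_neg_eq]
      · -- lam < γ
        have hmax : max γ lam = γ := max_eq_left hgt.le
        have hmin : min γ lam = lam := min_eq_right hgt.le
        rw [hmax, hmin]
        have hψ1 : lam / γ ≠ 1 := fun h =>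
          h2 ((div_eq_one_iff_eq hγne).mp h).symm
        have hterm : ∀ t ∈ Finset.range τ,
            γ ^ (τ - 1 - t) * lam ^ t = γ ^ (τ - 1) * (lam / γ) ^ t := by
          intro t ht
          have h1' : γ ^ (τ - 1) = γ ^ (τ - 1 - t) * γ ^ t := by
            rw [← pow_add]; congr 1; have := Finset.mem_range.mp ht; omega
          rw [div_pow, h1']
          field_simp
        rw [Finset.sum_congr rfl hterm, ← Finset.mul_sum, geom_sum_eq hψ1 τ,
          show (1:ℝ) - (lam/γ) ^ τ = -((lam/γ) ^ τ - 1) by ring,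
          show (1:ℝ) - lam/γ = -(lam/γ - 1) by ring]
        rw [mul_div_assoc, neg_div_neg_eq]

/-- deterministic content of Lemma 1, convergence of the expected
discount-averaged epoch reward to the expected stationary reward.  If the chain mixes
geometrically, i.e. `∑_θ |(βPᵗ)(θ) - π(θ)| ≤ C λᵗ` for all initial distributions `β` and
all `t`, then the discount-averaged expected reward over an epoch of length `τ` deviates
from the stationary reward by at most `(C/Γ)·Υ(τ)`. -/
theorem expected_epoch_reward_close_to_stationary
    {Θ : Type*} [Fintype Θ] [Nonempty Θ]
    (P : Θ → Θ → ℝ) (π : Θ → ℝ) (r : Θ → ℝ)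
    (hP_nonneg : ∀ θ θ', 0 ≤ P θ θ') (hP_row : ∀ θ, ∑ θ', P θ θ' = 1)
    (hπ_nonneg : ∀ θ, 0 ≤ π θ) (hπ_sum : ∑ θ, π θ = 1)
    (hπ_stat : ∀ θ', ∑ θ, π θ * P θ θ' = π θ')
    (hr : ∀ θ, r θ ∈ Set.Icc (0:ℝ) 1)
    (C lam : ℝ) (hC : 0 ≤ C) (hlam0 : 0 ≤ lam) (hlam1 : lam < 1)
    (hmix : ∀ β : Θ → ℝ, (∀ θ, 0 ≤ β θ) → (∑ θ, β θ = 1) →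
      ∀ t : ℕ, ∑ θ, |distIter P β t θ - π θ| ≤ C * lam ^ t)
    (γ : ℝ) (hγ0 : 0 < γ) (hγ1 : γ ≤ 1)
    (τ : ℕ) (hτ : 1 ≤ τ)
    (β : Θ → ℝ) (hβ_nonneg : ∀ θ, 0 ≤ β θ) (hβ_sum : ∑ θ, β θ = 1) :
    |∑ θ, r θ * π θ -
        (1 / ∑ t ∈ Finset.range τ, γ ^ t) *
          ∑ t ∈ Finset.range τ, γ ^ (τ - 1 - t) * ∑ θ, r θ * distIter P β t θ| ≤
      (C / ∑ t ∈ Finset.range τ, γ ^ t) *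
        (if γ = 1 then (1 - lam ^ τ) / (1 - lam)
         else if γ = lam then (max γ lam) ^ (τ - 1) * τ
         else (max γ lam) ^ (τ - 1) * (1 - (min γ lam / max γ lam) ^ τ) /
           (1 - min γ lam / max γ lam)) := by
  set Γ : ℝ := ∑ t ∈ Finset.range τ, γ ^ t with hΓdef
  have hΓpos : 0 < Γ := Finset.sum_pos (fun i _ => pow_pos hγ0 i)
    (Finset.nonempty_range_iff.mpr (by omega))
  have hΓne : Γ ≠ 0 := ne_of_gt hΓpos
  have hrefl : ∑ t ∈ Finset.range τ, γ ^ (τ - 1 - t) = Γ :=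
    Finset.sum_range_reflect (fun t => γ ^ t) τ
  -- per-epoch deviation bound
  have hS : ∀ t : ℕ, |∑ θ, r θ * π θ - ∑ θ, r θ * distIter P β t θ| ≤ C * lam ^ t := by
    intro t
    have hmx := hmix β hβ_nonneg hβ_sum t
    calc |∑ θ, r θ * π θ - ∑ θ, r θ * distIter P β t θ|
        = |∑ θ, r θ * (π θ - distIter P β t θ)| := by
          rw [← Finset.sum_sub_distrib]; congr 1; apply Finset.sum_congr rfl
          intro θ _; ring
      _ ≤ ∑ θ, |r θ * (π θ - distIter P β t θ)| := Finset.abs_sum_le_sum_abs _ _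
      _ ≤ ∑ θ, |distIter P β t θ - π θ| := by
          apply Finset.sum_le_sum
          intro θ _
          rw [abs_mul, abs_sub_comm]
          have h1 : |r θ| ≤ 1 := abs_le.mpr ⟨by linarith [(hr θ).1], (hr θ).2⟩
          calc |r θ| * |distIter P β t θ - π θ|
              ≤ 1 * |distIter P β t θ - π θ| :=
                mul_le_mul_of_nonneg_right h1 (abs_nonneg _)
            _ = _ := one_mul _
      _ ≤ C * lam ^ t := hmx
  -- rewrite the difference
  have hkey : ∑ θ, r θ * π θ -
      (1 / Γ) * ∑ t ∈ Finset.range τ, γ ^ (τ - 1 - t) * ∑ θ, r θ * distIter P β t θ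
      = (1 / Γ) * ∑ t ∈ Finset.range τ,
          γ ^ (τ - 1 - t) * (∑ θ, r θ * π θ - ∑ θ, r θ * distIter P β t θ) := by
    have : ∑ t ∈ Finset.range τ,
        γ ^ (τ - 1 - t) * (∑ θ, r θ * π θ - ∑ θ, r θ * distIter P β t θ)
        = Γ * (∑ θ, r θ * π θ)
          - ∑ t ∈ Finset.range τ, γ ^ (τ - 1 - t) * ∑ θ, r θ * distIter P β t θ := by
      simp only [mul_sub]
      rw [Finset.sum_sub_distrib, ← Finset.sum_mul, hrefl]
    rw [this]
    field_simp
  rw [hkey]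
  have habs : |(1 / Γ) * ∑ t ∈ Finset.range τ,
      γ ^ (τ - 1 - t) * (∑ θ, r θ * π θ - ∑ θ, r θ * distIter P β t θ)|
      ≤ (1 / Γ) * ∑ t ∈ Finset.range τ, γ ^ (τ - 1 - t) * (C * lam ^ t) := by
    rw [abs_mul, abs_of_pos (by positivity : (0:ℝ) < 1 / Γ)]
    apply mul_le_mul_of_nonneg_left _ (by positivity)
    calc |∑ t ∈ Finset.range τ,
          γ ^ (τ - 1 - t) * (∑ θ, r θ * π θ - ∑ θ, r θ * distIter P β t θ)|
        ≤ ∑ t ∈ Finset.range τ,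
          |γ ^ (τ - 1 - t) * (∑ θ, r θ * π θ - ∑ θ, r θ * distIter P β t θ)| :=
          Finset.abs_sum_le_sum_abs _ _
      _ ≤ ∑ t ∈ Finset.range τ, γ ^ (τ - 1 - t) * (C * lam ^ t) := by
          apply Finset.sum_le_sum
          intro t _
          rw [abs_mul, abs_of_pos (pow_pos hγ0 _)]
          exact mul_le_mul_of_nonneg_left (hS t) (le_of_lt (pow_pos hγ0 _))
  refine habs.trans (le_of_eq ?_)
  rw [← upsilon_eq' γ lam hγ0 hγ1 hlam0 hlam1 τ hτ, Finset.mul_sum, Finset.mul_sum]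
  apply Finset.sum_congr rfl
  intro t _
  ring

end
end

section
/- Let Θ be a finite set, P a row-stochastic matrix on Θ with stationary distribution π, and r : Θ → [0,1]. Suppose there exist constants C ≥ 0 and λ ∈ [0,1) such that for every probability distribution β on Θ and every integer t ≥ 0, ∑_{θ∈Θ} |(βPᵗ)(θ) − π(θ)| ≤ C λᵗ. Fix γ ∈ (0,1], positive integers τ₀, ζ, T, set τ_i = τ₀ + ζ(i−1) and Γ_i = ∑_{t=0}^{τ_i−1} γᵗ, and let β₁, …, β_T be arbitrary probability distributions on Θ. Then |∑_θ r(θ)π(θ) − (1/T)∑_{i=1}^{T} (1/Γ_i) ∑_{t=0}^{τ_i−1} γ^{τ_i−1−t} ∑_θ r(θ)(β_i Pᵗ)(θ)| ≤ L(T)/T, where, with η = min{γ,λ}, φ = max{γ,λ}: L(T) = C·(φ^{τ₀}/(φ−η))·(1−φ^{ζT})/(1−φ^ζ) if γ ∈ (0,1) and γ ≠ λ; L(T) = C·φ^{τ₀−1}·((τ₀ − φ^{ζT}(τ₀+ζT))/(1−φ^ζ) + ζφ^ζ(1−φ^{ζT})/(1−φ^ζ)²) if γ ∈ (0,1) and γ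 = λ; and L(T) = (C/(1−λ))·(1/τ₀ + (1/ζ)log(1 + ζT/τ₀)) if γ = 1. -/
/-!
Each epoch's discounted mean is a convex combination of the expected rewards at times
`t < τ`, and since `|r| ≤ 1` the mixing bound puts the one at time `t` within `C λ^t` of the
stationary reward. So the epoch of length `τ` is off by at most
`C ∑_{t<τ} γ^(τ-1-t) λ^t / Γ`, and it remains to sum these biases over the epochs.
For `γ = 1` the bias is at most `C / ((1 - λ) τ)`, and the harmonic-type sum
`∑ 1 / (τ₀ + ζ i)` is compared with a logarithm. For `γ < 1` we use `Γ ≥ 1` and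
`∑_{t<τ} γ^(τ-1-t) λ^t = (φ^τ - η^τ) / (φ - η)` (`= τ γ^(τ-1)` when `γ = λ`), which leaves a
geometric (resp. arithmetico-geometric) series in the epoch index.
-/

open Finset
open scoped Classical

noncomputable section

lemma abs_sub_weighted_mean_le {ι : Type*} (s : Finset ι) (w b : ι → ℝ) (a : ℝ)
    (hw : ∀ i ∈ s, 0 ≤ w i) (hW : 0 < ∑ i ∈ s, w i) :
    |a - (1 / ∑ i ∈ s, w i) * ∑ i ∈ s, w i * b i| ≤
      (1 / ∑ i ∈ s, w i) * ∑ i ∈ s, w i * |a - b i| := by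
  have hmean : a - (1 / ∑ i ∈ s, w i) * ∑ i ∈ s, w i * b i =
      (1 / ∑ i ∈ s, w i) * ∑ i ∈ s, w i * (a - b i) := by
    simp only [mul_sub, sum_sub_distrib, ← sum_mul]
    field_simp
  rw [hmean, abs_mul, abs_of_pos (one_div_pos.mpr hW)]
  gcongr
  refine (abs_sum_le_sum_abs _ _).trans (sum_le_sum fun i hi => ?_)
  rw [abs_mul, abs_of_nonneg (hw i hi)]

lemma abs_sub_mean_le (b : ℕ → ℝ) (a : ℝ) {n : ℕ} (hn : 0 < n) :
    |a - (1 / (n : ℝ)) * ∑ i ∈ range n, b i| ≤ (1 / (n : ℝ)) * ∑ i ∈ range n, |a - b i| := by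
  simpa using abs_sub_weighted_mean_le (range n) (fun _ => 1) b a (fun _ _ => zero_le_one)
    (by simpa using hn)

lemma abs_sum_mul_sub_sum_mul_le {Θ : Type*} [Fintype Θ] (r μ ν : Θ → ℝ)
    (hr : ∀ θ, |r θ| ≤ 1) :
    |∑ θ, r θ * μ θ - ∑ θ, r θ * ν θ| ≤ ∑ θ, |ν θ - μ θ| := by
  rw [← sum_sub_distrib]
  refine (abs_sum_le_sum_abs _ _).trans (sum_le_sum fun θ _ => ?_)
  rw [← mul_sub, abs_mul, abs_sub_comm]
  exact mul_le_of_le_one_left (abs_nonneg _) (hr θ)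

lemma sum_range_one_div_add_mul_le {a b : ℝ} (ha : 0 < a) (hb : 0 < b) (n : ℕ) :
    ∑ i ∈ range n, 1 / (a + b * i) ≤ 1 / a + 1 / b * Real.log (1 + b * n / a) := by
  have hpos : ∀ i : ℕ, 0 < a + b * i := fun i => by positivity
  have hstep : ∀ i : ℕ, 1 / (a + b * (i + 1 : ℕ)) ≤
      1 / b * (Real.log (a + b * (i + 1 : ℕ)) - Real.log (a + b * i)) := by
    intro i
    have h := Real.one_sub_inv_le_log_of_pos (div_pos (hpos (i + 1)) (hpos i))
    rw [Real.log_div (hpos (i + 1)).ne' (hpos i).ne', inv_div] at h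
    have hsub : 1 - (a + b * i) / (a + b * (i + 1 : ℕ)) = b * (1 / (a + b * (i + 1 : ℕ))) := by
      field_simp
      push_cast
      ring
    rw [hsub] at h
    rwa [one_div_mul_eq_div, le_div_iff₀' hb]
  calc ∑ i ∈ range n, 1 / (a + b * i) ≤ ∑ i ∈ range (n + 1), 1 / (a + b * i) :=
        sum_le_sum_of_subset_of_nonneg (range_subset_range.2 n.le_succ)
          fun i _ _ => (one_div_pos.2 (hpos i)).le
    _ = ∑ i ∈ range n, 1 / (a + b * (i + 1 : ℕ)) + 1 / a := by
        rw [sum_range_succ']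
        simp
    _ ≤ ∑ i ∈ range n, 1 / b * (Real.log (a + b * (i + 1 : ℕ)) - Real.log (a + b * i)) +
          1 / a := by
        gcongr with i
        exact hstep i
    _ = 1 / a + 1 / b * Real.log (1 + b * n / a) := by
        rw [← mul_sum, sum_range_sub (fun i : ℕ => Real.log (a + b * i)), Nat.cast_zero, mul_zero,
          add_zero, ← Real.log_div (hpos n).ne' ha.ne', add_div, div_self ha.ne']
        ring

lemma sum_range_add_mul_mul_pow (a b x : ℝ) (n : ℕ) :
    (∑ i ∈ range n, (a + b * i) * x ^ i) * (1 - x) ^ 2 =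
      (a - x ^ n * (a + b * n)) * (1 - x) + b * x * (1 - x ^ n) := by
  induction n with
  | zero => simp
  | succ n ih =>
    rw [sum_range_succ, add_mul, ih]
    push_cast
    ring

lemma sum_pow_sub_mul_pow_self (γ : ℝ) (n : ℕ) :
    ∑ t ∈ range n, γ ^ (n - 1 - t) * γ ^ t = n * γ ^ (n - 1) := by
  rw [sum_congr rfl fun t ht => ?_, sum_const, card_range, nsmul_eq_mul]
  rw [← pow_add, Nat.sub_add_cancel (by have := mem_range.mp ht; omega)]

lemma sum_pow_sub_mul_pow_le_of_ne {γ lam : ℝ} (hγ : 0 ≤ γ) (hlam : 0 ≤ lam) (hne : γ ≠ lam)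
    (n : ℕ) :
    ∑ t ∈ range n, γ ^ (n - 1 - t) * lam ^ t ≤ max γ lam ^ n / (max γ lam - min γ lam) := by
  have hgap : 0 < max γ lam - min γ lam := sub_pos.2 (min_lt_max.2 hne)
  have hsum : (∑ t ∈ range n, γ ^ (n - 1 - t) * lam ^ t) * (max γ lam - min γ lam) =
      max γ lam ^ n - min γ lam ^ n := by
    rcases le_total γ lam with h | h
    · rw [max_eq_right h, min_eq_left h, ← geom_sum₂_mul]
      simp only [mul_comm]
    · rw [max_eq_left h, min_eq_right h, ← geom_sum₂_mul, geom_sum₂_comm]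
      simp only [mul_comm]
  rw [← eq_div_iff hgap.ne'] at hsum
  rw [hsum]
  gcongr
  exact sub_le_self _ (pow_nonneg (le_min hγ hlam) n)

section epochBias

variable {C γ lam : ℝ}

def epochBias (C γ lam : ℝ) (n : ℕ) : ℝ :=
  C * (∑ t ∈ range n, γ ^ (n - 1 - t) * lam ^ t) / ∑ t ∈ range n, γ ^ t

lemma abs_sub_discounted_mean_le_epochBias {a : ℝ} {b : ℕ → ℝ} {n : ℕ}
    (hγ : 0 ≤ γ) (hn : 0 < n) (hb : ∀ t, |a - b t| ≤ C * lam ^ t) :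
    |a - (1 / ∑ t ∈ range n, γ ^ t) * ∑ t ∈ range n, γ ^ (n - 1 - t) * b t| ≤
      epochBias C γ lam n := by
  have hΓ : ∑ t ∈ range n, γ ^ (n - 1 - t) = ∑ t ∈ range n, γ ^ t :=
    sum_range_reflect (γ ^ ·) n
  have hmean := abs_sub_weighted_mean_le (range n) (fun t => γ ^ (n - 1 - t)) b a
    (fun _ _ => by positivity) (hΓ ▸ geom_sum_pos hγ hn.ne')
  rw [hΓ] at hmean
  calc _ ≤ _ := hmean
    _ ≤ (1 / ∑ t ∈ range n, γ ^ t) * ∑ t ∈ range n, γ ^ (n - 1 - t) * (C * lam ^ t) := by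
      gcongr with t
      exact hb t
    _ = epochBias C γ lam n := by
      simp only [epochBias, mul_left_comm _ C, ← mul_sum]
      ring

lemma epochBias_le (hC : 0 ≤ C) (hγ : 0 ≤ γ) (hlam : 0 ≤ lam) {n : ℕ} (hn : 0 < n) :
    epochBias C γ lam n ≤ C * ∑ t ∈ range n, γ ^ (n - 1 - t) * lam ^ t := by
  refine div_le_self (by positivity) ?_
  simpa using single_le_sum (fun t _ => pow_nonneg hγ t) (mem_range.mpr hn)

lemma epochBias_one_le (hC : 0 ≤ C) (hlam0 : 0 ≤ lam) (hlam1 : lam < 1) (n : ℕ) :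
    epochBias C 1 lam n ≤ C / (1 - lam) * (1 / n) := by
  have hgeom : ∑ t ∈ range n, lam ^ t ≤ 1 / (1 - lam) := by
    simpa using geom_sum_Ico_le_of_lt_one (m := 0) (n := n) hlam0 hlam1
  simp only [epochBias, one_pow, one_mul, sum_const, card_range, nsmul_eq_mul, mul_one]
  calc (C * ∑ t ∈ range n, lam ^ t) / n ≤ C * (1 / (1 - lam)) / n := by gcongr
    _ = C / (1 - lam) * (1 / n) := by ring

variable {τ₀ ζ : ℕ}

lemma sum_epochBias_one_le (hC : 0 ≤ C) (hlam0 : 0 ≤ lam) (hlam1 : lam < 1) (hτ₀ : 0 < τ₀)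
    (hζ : 0 < ζ) (T : ℕ) :
    ∑ i ∈ range T, epochBias C 1 lam (τ₀ + ζ * i) ≤
      (C / (1 - lam)) * (1 / (τ₀ : ℝ) + (1 / (ζ : ℝ)) * Real.log (1 + (ζ : ℝ) * T / τ₀)) := by
  have hlam : 0 < 1 - lam := sub_pos.2 hlam1
  calc ∑ i ∈ range T, epochBias C 1 lam (τ₀ + ζ * i)
      ≤ ∑ i ∈ range T, C / (1 - lam) * (1 / ((τ₀ : ℝ) + ζ * i)) :=
        sum_le_sum fun i _ => by exact_mod_cast epochBias_one_le hC hlam0 hlam1 (τ₀ + ζ * i)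
    _ = C / (1 - lam) * ∑ i ∈ range T, 1 / ((τ₀ : ℝ) + ζ * i) := (mul_sum ..).symm
    _ ≤ _ := by
        gcongr
        exact sum_range_one_div_add_mul_le (by exact_mod_cast hτ₀) (by exact_mod_cast hζ) T

lemma sum_epochBias_self_le (hC : 0 ≤ C) (hγ0 : 0 ≤ γ) (hγ1 : γ < 1) (hτ₀ : 0 < τ₀)
    (hζ : 0 < ζ) (T : ℕ) :
    ∑ i ∈ range T, epochBias C γ γ (τ₀ + ζ * i) ≤
      C * γ ^ (τ₀ - 1) *
        (((τ₀ : ℝ) - γ ^ (ζ * T) * ((τ₀ : ℝ) + (ζ : ℝ) * T)) / (1 - γ ^ ζ) +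
          (ζ : ℝ) * γ ^ ζ * (1 - γ ^ (ζ * T)) / (1 - γ ^ ζ) ^ 2) := by
  have hx : 1 - γ ^ ζ ≠ 0 := (sub_pos.2 (pow_lt_one₀ hγ0 hγ1 hζ.ne')).ne'
  have hpow : ∀ i : ℕ, γ ^ (τ₀ + ζ * i - 1) = γ ^ (τ₀ - 1) * (γ ^ ζ) ^ i := fun i => by
    rw [← pow_mul, ← pow_add]
    congr 1
    omega
  calc ∑ i ∈ range T, epochBias C γ γ (τ₀ + ζ * i)
      ≤ ∑ i ∈ range T, C * γ ^ (τ₀ - 1) * (((τ₀ : ℝ) + ζ * i) * (γ ^ ζ) ^ i) :=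
        sum_le_sum fun i _ => by
          refine (epochBias_le hC hγ0 hγ0 (by omega)).trans_eq ?_
          rw [sum_pow_sub_mul_pow_self, hpow]
          push_cast
          ring
    _ = C * γ ^ (τ₀ - 1) * ∑ i ∈ range T, ((τ₀ : ℝ) + ζ * i) * (γ ^ ζ) ^ i := (mul_sum ..).symm
    _ = _ := by
        rw [eq_div_of_mul_eq (pow_ne_zero 2 hx) (sum_range_add_mul_mul_pow _ _ _ T), pow_mul]
        field_simp

lemma sum_epochBias_le_of_ne (hC : 0 ≤ C) (hγ0 : 0 ≤ γ) (hγ1 : γ < 1) (hlam0 : 0 ≤ lam)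
    (hlam1 : lam < 1) (hne : γ ≠ lam) (hτ₀ : 0 < τ₀) (hζ : 0 < ζ) (T : ℕ) :
    ∑ i ∈ range T, epochBias C γ lam (τ₀ + ζ * i) ≤
      C * ((max γ lam) ^ τ₀ / (max γ lam - min γ lam)) *
        ((1 - (max γ lam) ^ (ζ * T)) / (1 - (max γ lam) ^ ζ)) := by
  have hgeom : ∑ i ∈ range T, ((max γ lam) ^ ζ) ^ i =
      (1 - ((max γ lam) ^ ζ) ^ T) / (1 - (max γ lam) ^ ζ) := by
    rw [geom_sum_eq (pow_lt_one₀ (le_max_of_le_left hγ0) (max_lt hγ1 hlam1) hζ.ne').ne,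
      ← neg_div_neg_eq, neg_sub, neg_sub]
  calc ∑ i ∈ range T, epochBias C γ lam (τ₀ + ζ * i)
      ≤ ∑ i ∈ range T,
          C * ((max γ lam) ^ τ₀ / (max γ lam - min γ lam)) * ((max γ lam) ^ ζ) ^ i :=
        sum_le_sum fun i _ => by
          refine (epochBias_le hC hγ0 hlam0 (by omega)).trans ?_
          rw [mul_assoc, div_mul_eq_mul_div, ← pow_mul, ← pow_add]
          gcongr
          exact sum_pow_sub_mul_pow_le_of_ne hγ0 hlam0 hne _
    _ = _ := by rw [← mul_sum, hgeom, pow_mul]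

end epochBias

-- The paper's `L(T)`.
def epochBiasBound (C γ lam : ℝ) (τ₀ ζ T : ℕ) : ℝ :=
  if γ = 1 then
    (C / (1 - lam)) * (1 / (τ₀ : ℝ) + (1 / (ζ : ℝ)) * Real.log (1 + (ζ : ℝ) * T / τ₀))
  else if γ = lam then
    C * (max γ lam) ^ (τ₀ - 1) *
      (((τ₀ : ℝ) - (max γ lam) ^ (ζ * T) * ((τ₀ : ℝ) + (ζ : ℝ) * T)) /
          (1 - (max γ lam) ^ ζ) +
        (ζ : ℝ) * (max γ lam) ^ ζ * (1 - (max γ lam) ^ (ζ * T)) /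
          (1 - (max γ lam) ^ ζ) ^ 2)
  else
    C * ((max γ lam) ^ τ₀ / (max γ lam - min γ lam)) *
      ((1 - (max γ lam) ^ (ζ * T)) / (1 - (max γ lam) ^ ζ))

lemma sum_epochBias_le_epochBiasBound {C γ lam : ℝ} {τ₀ ζ : ℕ} (hC : 0 ≤ C) (hlam0 : 0 ≤ lam)
    (hlam1 : lam < 1) (hγ0 : 0 ≤ γ) (hγ1 : γ ≤ 1) (hτ₀ : 0 < τ₀) (hζ : 0 < ζ) (T : ℕ) :
    ∑ i ∈ range T, epochBias C γ lam (τ₀ + ζ * i) ≤ epochBiasBound C γ lam τ₀ ζ T := by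
  unfold epochBiasBound
  split_ifs with hγ hγlam
  · subst hγ
    exact sum_epochBias_one_le hC hlam0 hlam1 hτ₀ hζ T
  · subst hγlam
    rw [max_self]
    exact sum_epochBias_self_le hC hγ0 (hγ1.lt_of_ne hγ) hτ₀ hζ T
  · exact sum_epochBias_le_of_ne hC hγ0 (hγ1.lt_of_ne hγ) hlam0 hlam1 hγlam hτ₀ hζ T

/-- Epochs are indexed from `0`: epoch `i` is the paper's epoch `i + 1`, of length `τ₀ + ζ * i`. -/
theorem expected_mean_epoch_reward_close_to_stationary_general
    {Θ : Type*} [Fintype Θ]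
    (P : Θ → Θ → ℝ) (π : Θ → ℝ) (r : Θ → ℝ)
    (hr : ∀ θ, r θ ∈ Set.Icc (0:ℝ) 1)
    (C lam : ℝ) (hC : 0 ≤ C) (hlam0 : 0 ≤ lam) (hlam1 : lam < 1)
    (hmix : ∀ β : Θ → ℝ, (∀ θ, 0 ≤ β θ) → (∑ θ, β θ = 1) →
      ∀ t : ℕ, ∑ θ, |distIter P β t θ - π θ| ≤ C * lam ^ t)
    (γ : ℝ) (hγ0 : 0 < γ) (hγ1 : γ ≤ 1)
    (τ₀ ζ T : ℕ) (hτ₀ : 0 < τ₀) (hζ : 0 < ζ) (hT : 0 < T)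
    (β : ℕ → Θ → ℝ)
    (hβ_nonneg : ∀ i < T, ∀ θ, 0 ≤ β i θ) (hβ_sum : ∀ i < T, ∑ θ, β i θ = 1) :
    |∑ θ, r θ * π θ -
        (1 / (T : ℝ)) * ∑ i ∈ Finset.range T,
          (1 / ∑ t ∈ Finset.range (τ₀ + ζ * i), γ ^ t) *
            ∑ t ∈ Finset.range (τ₀ + ζ * i),
              γ ^ (τ₀ + ζ * i - 1 - t) * ∑ θ, r θ * distIter P (β i) t θ| ≤
      (if γ = 1 then
        (C / (1 - lam)) * (1 / (τ₀ : ℝ) + (1 / (ζ : ℝ)) * Real.log (1 + (ζ : ℝ) * T / τ₀))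
       else if γ = lam then
        C * (max γ lam) ^ (τ₀ - 1) *
          (((τ₀ : ℝ) - (max γ lam) ^ (ζ * T) * ((τ₀ : ℝ) + (ζ : ℝ) * T)) /
              (1 - (max γ lam) ^ ζ) +
            (ζ : ℝ) * (max γ lam) ^ ζ * (1 - (max γ lam) ^ (ζ * T)) /
              (1 - (max γ lam) ^ ζ) ^ 2)
       else
        C * ((max γ lam) ^ τ₀ / (max γ lam - min γ lam)) *
          ((1 - (max γ lam) ^ (ζ * T)) / (1 - (max γ lam) ^ ζ))) / (T : ℝ) := by
  have hreward : ∀ i < T, ∀ t, |∑ θ, r θ * π θ - ∑ θ, r θ * distIter P (β i) t θ| ≤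
      C * lam ^ t := fun i hi t =>
    (abs_sum_mul_sub_sum_mul_le r π _ fun θ => abs_le.2 ⟨by linarith [(hr θ).1], (hr θ).2⟩).trans
      (hmix (β i) (hβ_nonneg i hi) (hβ_sum i hi) t)
  calc _ ≤ (1 / (T : ℝ)) * ∑ i ∈ range T, epochBias C γ lam (τ₀ + ζ * i) := by
        refine (abs_sub_mean_le _ _ hT).trans ?_
        gcongr with i hi
        exact abs_sub_discounted_mean_le_epochBias hγ0.le (by positivity)
          (hreward i (mem_range.1 hi))
    _ ≤ (1 / (T : ℝ)) * epochBiasBound C γ lam τ₀ ζ T := by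
        gcongr
        exact sum_epochBias_le_epochBiasBound hC hlam0 hlam1 hγ0.le hγ1 hτ₀ hζ T
    _ = _ := one_div_mul_eq_div _ _

/-- deterministic content of Lemma 2, convergence of the expected mean
epoch reward to the expected stationary reward after `T` pulls with linearly growing
epoch lengths `τ_i = τ₀ + ζ(i-1)`.  Here epoch `i` (for `i = 0, …, T-1` in 0-based
indexing, corresponding to the paper's `i+1`) has length `τ₀ + ζ·i`, discount weights
`γ^{τ_i-1-t}`, normalizer `Γ_i = ∑_{t<τ_i} γ^t`, and arbitrary initial distribution
`β i`. -/
theorem expected_mean_epoch_reward_close_to_stationary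
    {Θ : Type*} [Fintype Θ] [Nonempty Θ]
    (P : Θ → Θ → ℝ) (π : Θ → ℝ) (r : Θ → ℝ)
    (hP_nonneg : ∀ θ θ', 0 ≤ P θ θ') (hP_row : ∀ θ, ∑ θ', P θ θ' = 1)
    (hπ_nonneg : ∀ θ, 0 ≤ π θ) (hπ_sum : ∑ θ, π θ = 1)
    (hπ_stat : ∀ θ', ∑ θ, π θ * P θ θ' = π θ')
    (hr : ∀ θ, r θ ∈ Set.Icc (0:ℝ) 1)
    (C lam : ℝ) (hC : 0 ≤ C) (hlam0 : 0 ≤ lam) (hlam1 : lam < 1)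
    (hmix : ∀ β : Θ → ℝ, (∀ θ, 0 ≤ β θ) → (∑ θ, β θ = 1) →
      ∀ t : ℕ, ∑ θ, |distIter P β t θ - π θ| ≤ C * lam ^ t)
    (γ : ℝ) (hγ0 : 0 < γ) (hγ1 : γ ≤ 1)
    (τ₀ ζ T : ℕ) (hτ₀ : 0 < τ₀) (hζ : 0 < ζ) (hT : 0 < T)
    (β : ℕ → Θ → ℝ)
    (hβ_nonneg : ∀ i < T, ∀ θ, 0 ≤ β i θ) (hβ_sum : ∀ i < T, ∑ θ, β i θ = 1) :
    |∑ θ, r θ * π θ -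
        (1 / (T : ℝ)) * ∑ i ∈ Finset.range T,
          (1 / ∑ t ∈ Finset.range (τ₀ + ζ * i), γ ^ t) *
            ∑ t ∈ Finset.range (τ₀ + ζ * i),
              γ ^ (τ₀ + ζ * i - 1 - t) * ∑ θ, r θ * distIter P (β i) t θ| ≤
      (if γ = 1 then
        (C / (1 - lam)) * (1 / (τ₀ : ℝ) + (1 / (ζ : ℝ)) * Real.log (1 + (ζ : ℝ) * T / τ₀))
       else if γ = lam then
        C * (max γ lam) ^ (τ₀ - 1) *
          (((τ₀ : ℝ) - (max γ lam) ^ (ζ * T) * ((τ₀ : ℝ) + (ζ : ℝ) * T)) /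
              (1 - (max γ lam) ^ ζ) +
            (ζ : ℝ) * (max γ lam) ^ ζ * (1 - (max γ lam) ^ (ζ * T)) /
              (1 - (max γ lam) ^ ζ) ^ 2)
       else
        C * ((max γ lam) ^ τ₀ / (max γ lam - min γ lam)) *
          ((1 - (max γ lam) ^ (ζ * T)) / (1 - (max γ lam) ^ ζ))) / (T : ℝ) :=
  expected_mean_epoch_reward_close_to_stationary_general P π r hr C lam hC hlam0 hlam1 hmix γ hγ0
    hγ1 τ₀ ζ T hτ₀ hζ hT β hβ_nonneg hβ_sum

end
end

section
/- Let Δ ∈ (0,1], C > 0, λ ∈ [0,1), τ₀, ζ positive integers, and k ≥ 1 an integer. If ℓ is a positive integer with ℓ > (4/Δ²)·( C(1 + ζ/τ₀)/(√(ζτ₀)(1−λ)) + √(6·log k) )², then Δ − 2·( (C/(ℓ(1−λ)))·(1/τ₀ + (1/ζ)·log(1 + ℓζ/τ₀)) + √(6·log k / ℓ) ) > 0. -/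
/-!
With `x = ℓζ/τ₀ = s²`, the bias term `L(ℓ)/ℓ` equals `C/((1-λ)τ₀) · (1/ℓ + log(1 + s²)/s²)`,
while `C(1 + ζ/τ₀)/(√(ζτ₀)(1-λ)) / √ℓ` equals `C/((1-λ)τ₀) · (1/s + s/ℓ)`. Since
`log(1 + s²) ≤ min(s, s²)`, the first bracket is dominated by the second, so the whole window
is at most `(A + B)/√ℓ` with `A, B` the two summands of the hypothesis, and the hypothesis on
`ℓ` says precisely that `2(A + B)/√ℓ < Δ`.
-/

open Real

namespace Real

lemma log_one_add_sq_le {s : ℝ} (hs : 0 ≤ s) : log (1 + s ^ 2) ≤ s := by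
  have hexp : 1 + s + s ^ 2 / 2 + s ^ 3 / 6 ≤ exp s := by
    simpa [Finset.sum_range_succ, Nat.factorial] using sum_le_exp_of_nonneg hs 4
  rw [log_le_iff_le_exp (by positivity)]
  -- `s + s³/6 ≥ s²/2` because `s² - 3s + 6` has negative discriminant
  nlinarith [mul_nonneg hs (sq_nonneg (s - 3 / 2))]

lemma log_one_add_sq_div_sq_le_one {s : ℝ} (hs : 0 < s) : log (1 + s ^ 2) / s ^ 2 ≤ 1 := by
  rw [div_le_one (by positivity)]
  linarith [log_le_sub_one_of_pos (show 0 < 1 + s ^ 2 by positivity)]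

lemma log_one_add_sq_div_sq_le_one_div {s : ℝ} (hs : 0 < s) :
    log (1 + s ^ 2) / s ^ 2 ≤ 1 / s := by
  rw [div_le_div_iff₀ (by positivity) hs]
  nlinarith [log_one_add_sq_le hs.le]

end Real

lemma one_div_add_log_one_add_sq_div_sq_le {l s : ℝ} (hl : 1 ≤ l) (hs : 0 < s) :
    1 / l + log (1 + s ^ 2) / s ^ 2 ≤ 1 / s + s / l := by
  have hl0 : 0 < l := by linarith
  rcases le_total 1 s with h1 | h1
  · have : 1 / l ≤ s / l := div_le_div_of_nonneg_right h1 hl0.le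
    linarith [log_one_add_sq_div_sq_le_one_div hs]
  · have key : 0 ≤ (1 - s) * (1 / s - 1 / l) :=
      mul_nonneg (by linarith) (sub_nonneg.2 (one_div_le_one_div_of_le hs (h1.trans hl)))
    have : 1 + 1 / l ≤ 1 / s + s / l := by
      field_simp at key ⊢
      nlinarith [key]
    linarith [log_one_add_sq_div_sq_le_one hs]

lemma window_bias_le_div_sqrt {C K τ z l : ℝ} (hC : 0 ≤ C) (hK : 0 < K) (hτ : 0 < τ)
    (hz : 0 < z) (hl : 1 ≤ l) :
    C / (l * K) * (1 / τ + 1 / z * log (1 + l * z / τ)) ≤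
      C * (1 + z / τ) / (√(z * τ) * K) / √l := by
  set s := √(l * z / τ)
  have hs0 : 0 < s := sqrt_pos.2 (by positivity)
  have hs2 : s ^ 2 = l * z / τ := sq_sqrt (by positivity)
  have hsqrt : √(z * τ) * √l = τ * s := by
    rw [← sqrt_mul (by positivity), show z * τ * l = τ ^ 2 * (l * z / τ) by field_simp,
      sqrt_mul (sq_nonneg τ), sqrt_sq hτ.le]
  have hlhs : C / (l * K) * (1 / τ + 1 / z * log (1 + l * z / τ)) =
      C / (K * τ) * (1 / l + log (1 + s ^ 2) / s ^ 2) := by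
    rw [hs2]; field_simp
  have hrhs : C * (1 + z / τ) / (√(z * τ) * K) / √l = C / (K * τ) * (1 / s + s / l) := by
    rw [div_div, mul_right_comm, hsqrt]
    field_simp
    rw [hs2]; field_simp
  rw [hlhs, hrhs]
  exact mul_le_mul_of_nonneg_left (one_div_add_log_one_add_sq_div_sq_le hl hs0) (by positivity)

lemma two_mul_div_sqrt_lt_of_lt {Δ a l : ℝ} (hΔ : 0 < Δ) (hl : 4 / Δ ^ 2 * a ^ 2 < l) :
    2 * a / √l < Δ := by
  have hl0 : 0 < l := lt_of_le_of_lt (by positivity) hl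
  have hsq : (2 * a) ^ 2 < (Δ * √l) ^ 2 := by
    rw [mul_pow, mul_pow, sq_sqrt hl0.le]
    rw [div_mul_eq_mul_div, div_lt_iff₀ (by positivity)] at hl
    linarith
  rw [div_lt_iff₀ (sqrt_pos.2 hl0)]
  exact (le_abs_self _).trans_lt (abs_lt_of_sq_lt_sq hsq (by positivity))

theorem epochucb_sample_size_time_averaged_general
    (Δ C lam : ℝ) (τ₀ ζ k ℓ : ℕ)
    (hΔ0 : 0 < Δ) (hC : 0 < C) (hlam1 : lam < 1)
    (hτ₀ : 0 < τ₀) (hζ : 0 < ζ) (hℓ0 : 0 < ℓ)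
    (hℓ : (ℓ : ℝ) >
      (4 / Δ ^ 2) *
        (C * (1 + (ζ : ℝ) / τ₀) / (Real.sqrt ((ζ : ℝ) * τ₀) * (1 - lam)) +
          Real.sqrt (6 * Real.log k)) ^ 2) :
    Δ - 2 * ((C / ((ℓ : ℝ) * (1 - lam))) *
        (1 / (τ₀ : ℝ) + (1 / (ζ : ℝ)) * Real.log (1 + (ℓ : ℝ) * ζ / τ₀)) +
      Real.sqrt (6 * Real.log k / ℓ)) > 0 := by
  set A := C * (1 + (ζ : ℝ) / τ₀) / (√((ζ : ℝ) * τ₀) * (1 - lam))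
  set B := √(6 * log k)
  have hbias := window_bias_le_div_sqrt hC.le (sub_pos.2 hlam1) (Nat.cast_pos.2 hτ₀)
    (Nat.cast_pos.2 hζ) (Nat.one_le_cast.2 hℓ0)
  have hvar : √(6 * log k / ℓ) = B / √ℓ := sqrt_div' _ (Nat.cast_nonneg ℓ)
  have hwindow : 2 * (A + B) / √ℓ < Δ := two_mul_div_sqrt_lt_of_lt hΔ0 hℓ
  have hsplit : 2 * (A + B) / √ℓ = 2 * (A / √ℓ + B / √ℓ) := by ring
  rw [hvar]
  linarith

/-- sufficient sample size for EpochUCB under time-averaged feedback,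
`γ = 1`.  If `ℓ > (4/Δ²)(C(1 + ζ/τ₀)/(√(ζτ₀)(1-λ)) + √(6 log k))²`, then twice the
confidence window falls below the gap `Δ`. -/
theorem epochucb_sample_size_time_averaged
    (Δ C lam : ℝ) (τ₀ ζ k ℓ : ℕ)
    (hΔ0 : 0 < Δ) (hΔ1 : Δ ≤ 1) (hC : 0 < C) (hlam0 : 0 ≤ lam) (hlam1 : lam < 1)
    (hτ₀ : 0 < τ₀) (hζ : 0 < ζ) (hk : 1 ≤ k) (hℓ0 : 0 < ℓ)
    (hℓ : (ℓ : ℝ) >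
      (4 / Δ ^ 2) *
        (C * (1 + (ζ : ℝ) / τ₀) / (Real.sqrt ((ζ : ℝ) * τ₀) * (1 - lam)) +
          Real.sqrt (6 * Real.log k)) ^ 2) :
    Δ - 2 * ((C / ((ℓ : ℝ) * (1 - lam))) *
        (1 / (τ₀ : ℝ) + (1 / (ζ : ℝ)) * Real.log (1 + (ℓ : ℝ) * ζ / τ₀)) +
      Real.sqrt (6 * Real.log k / ℓ)) > 0 :=
  epochucb_sample_size_time_averaged_general Δ C lam τ₀ ζ k ℓ hΔ0 hC hlam1 hτ₀ hζ hℓ0 hℓ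
end
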